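/- arXiv:2101.09128 — 3 statements merged into one kernel-verified Lean document; each statement's English description precedes it below -/
import Mathlib

section
/- Let X be a real Banach space, I = [a,b] a compact interval and F: I×X → X a Carathéodory function. Assume there exists p ∈ [1,∞] such that for every bounded set B ⊂ X there are functions m_B ∈ L^p(I) and L_B ∈ L¹(I) with ‖F(t,x)‖ ≤ m_B(t) for a.e. t ∈ I and all x ∈ B, and ‖F(t,x) − F(t,y)‖ ≤ L_B(t)·‖x − y‖ for a.e. t ∈ I and all x,y ∈ B. Then for every t₀ ∈ I, x₀ ∈ X and R > 0 there exists δ > 0 such that, with I_δ = [t₀−δ, t₀+δ] ∩ I, for every initial value y₀ in the closed ball of radius R around x₀ there exists a unique continuous function x: I_δ → X satisfying x(t) = y₀ + ∫_{t₀}^t F(s, x(s)) ds for all t ∈ I_δ; moreover the function t ↦ F(t, x(t)) belongs to L^p(I_δ, X). -/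
/-!
The solution is the fixed point of the Picard operator `x ↦ y₀ + ∫_{t₀}^t F(s, x(s)) ds` on
continuous maps from `I_δ` into the ball `B(x₀, R + 1)`. By absolute continuity of the Lebesgue
integral, `δ` can be chosen so that the bound `m` and the Lipschitz function `L` of this ball have
integrals over `I_δ` adding up to less than `1/2`; the operator then maps the ball into itself for
every `y₀ ∈ B(x₀, R)` and is a `1/2`-contraction. A second solution need not stay in that ball, so
it is compared with the first through the Lipschitz function of a bounded set containing both: the
set where they agree is closed, and it is open because on a short interval around a point of
agreement the contraction estimate forces the supremum of their difference to vanish.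
Measurability of `t ↦ F(t, x(t))` comes from approximating `x` by step functions, which reduces
it to countably many measurable maps `t ↦ F(t, v)`.
-/

open MeasureTheory Set Filter Topology Metric
open scoped ENNReal NNReal

section Topology

variable {α β : Type*} [TopologicalSpace α] [TopologicalSpace β] [T2Space β]

theorem eqOn_of_isPreconnected_of_eventuallyEq {s : Set α} {f g : α → β} {a : α}
    (hs : IsPreconnected s) (hf : ContinuousOn f s) (hg : ContinuousOn g s) (ha : a ∈ s)
    (hfga : f a = g a) (hfg : ∀ x ∈ s, f x = g x → f =ᶠ[𝓝[s] x] g) : EqOn f g s := by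
  have : PreconnectedSpace s := Subtype.preconnectedSpace hs
  have hclopen : IsClopen {x : s | f x = g x} := by
    refine ⟨isClosed_eq hf.domRestrict hg.domRestrict, isOpen_iff_mem_nhds.2 fun x hx => ?_⟩
    exact (eventually_nhds_subtype_iff s x (fun y => f y = g y)).2 (hfg x x.2 hx)
  exact fun x hx => eq_univ_iff_forall.1 (hclopen.eq_univ ⟨⟨a, ha⟩, hfga⟩) ⟨x, hx⟩

end Topology

section Measurability

theorem tendsto_floor_mul_div_natCast_add_one (t : ℝ) :
    Tendsto (fun n : ℕ => (⌊t * (n + 1)⌋ : ℝ) / (n + 1)) atTop (𝓝 t) := by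
  have hlow : ∀ n : ℕ, t - 1 / ((n : ℝ) + 1) ≤ (⌊t * (n + 1)⌋ : ℝ) / (n + 1) := fun n => by
    rw [sub_le_iff_le_add, ← add_div, le_div_iff₀ (by positivity)]
    linarith [Int.lt_floor_add_one (t * (n + 1))]
  have hup : ∀ n : ℕ, (⌊t * (n + 1)⌋ : ℝ) / (n + 1) ≤ t := fun n =>
    (div_le_iff₀ (by positivity)).2 (Int.floor_le _)
  refine tendsto_of_tendsto_of_tendsto_of_le_of_le ?_ tendsto_const_nhds hlow hup
  simpa using (tendsto_const_nhds (x := t)).sub tendsto_one_div_add_atTop_nhds_zero_nat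

theorem aestronglyMeasurable_comp_of_countable_range {α β E : Type*} [MeasurableSpace α]
    [MeasurableSpace β] [MeasurableSingletonClass β] [TopologicalSpace E]
    [TopologicalSpace.PseudoMetrizableSpace E] {μ : Measure α} {G : α → β → E} {s : α → β}
    (hs : Measurable s) (hsr : (range s).Countable)
    (hG : ∀ v, AEStronglyMeasurable (fun t => G t v) μ) :
    AEStronglyMeasurable (fun t => G t (s t)) μ := by
  have : Countable (range s) := hsr.to_subtype
  have hcover : (⋃ v : range s, s ⁻¹' {(v : β)}) = univ :=
    eq_univ_of_forall fun t => mem_iUnion.2 ⟨⟨s t, mem_range_self t⟩, rfl⟩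
  rw [← Measure.restrict_univ (μ := μ), ← hcover, aestronglyMeasurable_iUnion_iff]
  intro v
  refine ((hG v).mono_measure Measure.restrict_le_self).congr ?_
  filter_upwards [ae_restrict_mem (hs (measurableSet_singleton _))] with t ht
  rw [mem_preimage, mem_singleton_iff] at ht
  rw [ht]

theorem aestronglyMeasurable_apply_self_of_ae_continuous {E : Type*} [TopologicalSpace E]
    [TopologicalSpace.PseudoMetrizableSpace E] {μ : Measure ℝ} {G : ℝ → ℝ → E}
    (hG : ∀ τ, AEStronglyMeasurable (fun t => G t τ) μ) (hGc : ∀ᵐ t ∂μ, Continuous (G t)) :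
    AEStronglyMeasurable (fun t => G t t) μ := by
  let s : ℕ → ℝ → ℝ := fun n t => (⌊t * (n + 1)⌋ : ℝ) / (n + 1)
  have hs : ∀ n, Measurable (s n) := fun n =>
    (measurable_from_top.comp (measurable_id.mul_const _).floor).div_const _
  have hsr : ∀ n, (range (s n)).Countable := fun n =>
    (countable_range fun k : ℤ => (k : ℝ) / (n + 1)).mono
      (range_subset_iff.2 fun t => mem_range.2 ⟨⌊t * (n + 1)⌋, rfl⟩)
  refine aestronglyMeasurable_of_tendsto_ae atTop
    (fun n => aestronglyMeasurable_comp_of_countable_range (hs n) (hsr n) hG) ?_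
  filter_upwards [hGc] with t ht
  exact (ht.tendsto t).comp (tendsto_floor_mul_div_natCast_add_one t)

structure IsCaratheodory {α X E : Type*} [MeasurableSpace α] [TopologicalSpace X]
    [TopologicalSpace E] (F : α → X → E) (μ : Measure α) : Prop where
  aestronglyMeasurable : ∀ x, AEStronglyMeasurable (fun t => F t x) μ
  ae_continuous : ∀ᵐ t ∂μ, Continuous (F t)

namespace IsCaratheodory

variable {X E : Type*} [TopologicalSpace X]

theorem mono {α : Type*} [MeasurableSpace α] [TopologicalSpace E] {F : α → X → E}
    {μ ν : Measure α} (hF : IsCaratheodory F μ) (hνμ : ν ≤ μ) : IsCaratheodory F ν :=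
  ⟨fun x => (hF.aestronglyMeasurable x).mono_measure hνμ, ae_mono hνμ hF.ae_continuous⟩

variable {F : ℝ → X → E} {x : ℝ → X} {c d : ℝ}

theorem aestronglyMeasurable_comp [TopologicalSpace E]
    [TopologicalSpace.PseudoMetrizableSpace E]
    {μ : Measure ℝ} (hF : IsCaratheodory F μ) (hx : Continuous x) :
    AEStronglyMeasurable (fun t => F t (x t)) μ :=
  aestronglyMeasurable_apply_self_of_ae_continuous (fun τ => hF.aestronglyMeasurable (x τ))
    (hF.ae_continuous.mono fun _ ht => ht.comp hx)

theorem aestronglyMeasurable_comp_of_continuousOn [TopologicalSpace E]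
    [TopologicalSpace.PseudoMetrizableSpace E]
    (hF : IsCaratheodory F (volume.restrict (Icc c d)))
    (hx : ContinuousOn x (Icc c d)) :
    AEStronglyMeasurable (fun t => F t (x t)) (volume.restrict (Icc c d)) := by
  rcases lt_or_ge d c with hdc | hcd
  · simp [Icc_eq_empty_of_lt hdc]
  refine (hF.aestronglyMeasurable_comp (hx.comp_continuous
    (continuous_subtype_val.comp continuous_projIcc) fun t => (projIcc c d hcd t).2)).congr ?_
  filter_upwards [ae_restrict_mem measurableSet_Icc] with t ht
  simp [projIcc_of_mem hcd ht]

variable [NormedAddCommGroup E] {B : Set X} {m : ℝ → ℝ}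

theorem memLp_comp {p : ℝ≥0∞} (hF : IsCaratheodory F (volume.restrict (Icc c d)))
    (hx : ContinuousOn x (Icc c d)) (hxB : MapsTo x (Icc c d) B)
    (hm : MemLp m p (volume.restrict (Icc c d)))
    (hmF : ∀ᵐ t ∂(volume.restrict (Icc c d)), ∀ y ∈ B, ‖F t y‖ ≤ m t) :
    MemLp (fun t => F t (x t)) p (volume.restrict (Icc c d)) := by
  refine hm.of_le (hF.aestronglyMeasurable_comp_of_continuousOn hx) ?_
  filter_upwards [hmF, ae_restrict_mem measurableSet_Icc] with t ht htJ
  exact (ht _ (hxB htJ)).trans (Real.le_norm_self _)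

theorem integrableOn_comp (hF : IsCaratheodory F (volume.restrict (Icc c d)))
    (hx : ContinuousOn x (Icc c d)) (hxB : MapsTo x (Icc c d) B) (hm : IntegrableOn m (Icc c d))
    (hmF : ∀ᵐ t ∂(volume.restrict (Icc c d)), ∀ y ∈ B, ‖F t y‖ ≤ m t) :
    IntegrableOn (fun t => F t (x t)) (Icc c d) :=
  memLp_one_iff_integrable.1 (hF.memLp_comp hx hxB (memLp_one_iff_integrable.2 hm) hmF)

end IsCaratheodory

end Measurability

section Integrals

theorem exists_pos_setIntegral_Icc_inter_lt {g : ℝ → ℝ} {s : Set ℝ} (hg : IntegrableOn g s)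
    (t₀ : ℝ) {ε : ℝ} (hε : 0 < ε) : ∃ δ > 0, ∫ t in Icc (t₀ - δ) (t₀ + δ) ∩ s, g t < ε := by
  have hvol : Tendsto (fun δ => volume.restrict s (Icc (t₀ - δ) (t₀ + δ))) (𝓝[>] 0) (𝓝 0) := by
    refine tendsto_of_tendsto_of_tendsto_of_le_of_le tendsto_const_nhds ?_ (fun _ => zero_le)
      fun δ => Measure.restrict_apply_le _ _
    simp only [Real.volume_Icc]
    refine ((ENNReal.continuous_ofReal.comp (by fun_prop : Continuous fun δ : ℝ =>
      t₀ + δ - (t₀ - δ))).tendsto' 0 0 (by simp)).mono_left nhdsWithin_le_nhds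
  obtain ⟨δ, hδ, hδpos⟩ := (((Integrable.tendsto_setIntegral_nhds_zero hg hvol).eventually
    (gt_mem_nhds hε)).and self_mem_nhdsWithin).exists
  refine ⟨δ, hδpos, ?_⟩
  rwa [Measure.restrict_restrict measurableSet_Icc] at hδ

variable {E : Type*} [NormedAddCommGroup E] {c d t₁ t : ℝ}

theorem MeasureTheory.IntegrableOn.intervalIntegrable_of_mem_Icc {f : ℝ → E}
    (hf : IntegrableOn f (Icc c d)) (ht₁ : t₁ ∈ Icc c d) (ht : t ∈ Icc c d) :
    IntervalIntegrable f volume t₁ t :=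
  (hf.mono_set (uIcc_subset_Icc ht₁ ht)).intervalIntegrable

theorem norm_intervalIntegral_le_setIntegral_Icc [NormedSpace ℝ E] {u : ℝ → E} {h : ℝ → ℝ}
    (ht₁ : t₁ ∈ Icc c d) (ht : t ∈ Icc c d) (hh : IntegrableOn h (Icc c d))
    (huh : ∀ᵐ s ∂(volume.restrict (Icc c d)), ‖u s‖ ≤ h s) :
    ‖∫ s in t₁..t, u s‖ ≤ ∫ s in Icc c d, h s := by
  have hsub : uIoc t₁ t ⊆ Icc c d := uIoc_subset_uIcc.trans (uIcc_subset_Icc ht₁ ht)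
  calc ‖∫ s in t₁..t, u s‖ ≤ ∫ s in uIoc t₁ t, ‖u s‖ :=
        intervalIntegral.norm_integral_le_integral_norm_uIoc
    _ ≤ ∫ s in uIoc t₁ t, h s :=
        integral_mono_of_nonneg (ae_of_all _ fun _ => norm_nonneg _) (hh.mono_set hsub)
          (ae_restrict_of_ae_restrict_of_subset hsub huh)
    _ ≤ ∫ s in Icc c d, h s :=
        setIntegral_mono_set hh (huh.mono fun _ hs => (norm_nonneg _).trans hs)
          hsub.eventuallyLE

end Integrals

section Picard

variable {X : Type*} [NormedAddCommGroup X] [NormedSpace ℝ X]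

noncomputable def picard (F : ℝ → X → X) (t₀ : ℝ) (y₀ : X) (x : ℝ → X) (t : ℝ) : X :=
  y₀ + ∫ s in t₀..t, F s (x s)

variable {F : ℝ → X → X} {c d t₀ t : ℝ} {y₀ : X} {x x' : ℝ → X}

theorem continuousOn_picard (hxF : IntegrableOn (fun s => F s (x s)) (Icc c d))
    (ht₀ : t₀ ∈ Icc c d) : ContinuousOn (picard F t₀ y₀ x) (Icc c d) := by
  have hcd : c ≤ d := ht₀.1.trans ht₀.2
  have hprim := intervalIntegral.continuousOn_primitive_interval'
    (hxF.intervalIntegrable_of_mem_Icc ⟨le_rfl, hcd⟩ ⟨hcd, le_rfl⟩) (by rwa [uIcc_of_le hcd])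
  rw [uIcc_of_le hcd] at hprim
  exact continuousOn_const.add hprim

theorem dist_picard_le (ht₀ : t₀ ∈ Icc c d) (ht : t ∈ Icc c d) {h : ℝ → ℝ}
    (hh : IntegrableOn h (Icc c d)) (hFh : ∀ᵐ s ∂(volume.restrict (Icc c d)), ‖F s (x s)‖ ≤ h s) :
    dist (picard F t₀ y₀ x t) y₀ ≤ ∫ s in Icc c d, h s := by
  rw [picard, dist_eq_norm, add_sub_cancel_left]
  exact norm_intervalIntegral_le_setIntegral_Icc ht₀ ht hh hFh

theorem dist_picard_picard_le (hxF : IntegrableOn (fun s => F s (x s)) (Icc c d))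
    (hx'F : IntegrableOn (fun s => F s (x' s)) (Icc c d)) (ht₀ : t₀ ∈ Icc c d)
    (ht : t ∈ Icc c d) {h : ℝ → ℝ} (hh : IntegrableOn h (Icc c d))
    (hFh : ∀ᵐ s ∂(volume.restrict (Icc c d)), ‖F s (x s) - F s (x' s)‖ ≤ h s) :
    dist (picard F t₀ y₀ x t) (picard F t₀ y₀ x' t) ≤ ∫ s in Icc c d, h s := by
  rw [picard, picard, dist_add_left, dist_eq_norm, ← intervalIntegral.integral_sub
    (hxF.intervalIntegrable_of_mem_Icc ht₀ ht) (hx'F.intervalIntegrable_of_mem_Icc ht₀ ht)]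
  exact norm_intervalIntegral_le_setIntegral_Icc ht₀ ht hh hFh

theorem eqOn_picard_of_eqOn_picard (hxF : IntegrableOn (fun s => F s (x s)) (Icc c d))
    (ht₀ : t₀ ∈ Icc c d) (hx : EqOn x (picard F t₀ y₀ x) (Icc c d)) {t₁ : ℝ}
    (ht₁ : t₁ ∈ Icc c d) : EqOn x (picard F t₁ (x t₁) x) (Icc c d) := by
  intro t ht
  rw [hx ht, hx ht₁]
  simp only [picard]
  rw [add_assoc, intervalIntegral.integral_add_adjacent_intervals
    (hxF.intervalIntegrable_of_mem_Icc ht₀ ht₁) (hxF.intervalIntegrable_of_mem_Icc ht₁ ht)]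

variable {x₀ : X} {r : ℝ} {B : Set X} {m L : ℝ → ℝ} {K : ℝ≥0}

theorem exists_continuous_eqOn_picard [CompleteSpace X]
    (hF : IsCaratheodory F (volume.restrict (Icc c d)))
    (ht₀ : t₀ ∈ Icc c d) (hm : IntegrableOn m (Icc c d)) (hL : IntegrableOn L (Icc c d))
    (hmF : ∀ᵐ t ∂(volume.restrict (Icc c d)), ∀ y ∈ closedBall x₀ r, ‖F t y‖ ≤ m t)
    (hLF : ∀ᵐ t ∂(volume.restrict (Icc c d)), ∀ y ∈ closedBall x₀ r, ∀ z ∈ closedBall x₀ r,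
      ‖F t y - F t z‖ ≤ L t * ‖y - z‖)
    (hy₀ : dist y₀ x₀ + ∫ t in Icc c d, |m t| ≤ r) (hLK : ∫ t in Icc c d, |L t| ≤ K)
    (hK : K < 1) :
    ∃ x : ℝ → X, Continuous x ∧ MapsTo x (Icc c d) (closedBall x₀ r) ∧
      EqOn x (picard F t₀ y₀ x) (Icc c d) := by
  have hcd : c ≤ d := ht₀.1.trans ht₀.2
  have : CompleteSpace (closedBall x₀ r) := isClosed_closedBall.completeSpace_coe
  let extend : C(Icc c d, closedBall x₀ r) → ℝ → X := fun f t => f (projIcc c d hcd t)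
  have hcont : ∀ f, Continuous (extend f) := fun f =>
    continuous_subtype_val.comp (f.continuous.comp continuous_projIcc)
  have hmem : ∀ f t, extend f t ∈ closedBall x₀ r := fun f t => (f _).2
  have hint : ∀ f, IntegrableOn (fun s => F s (extend f s)) (Icc c d) := fun f =>
    hF.integrableOn_comp (hcont f).continuousOn (fun t _ => hmem f t) hm hmF
  have hpicard_mem : ∀ f, ∀ t ∈ Icc c d, picard F t₀ y₀ (extend f) t ∈ closedBall x₀ r :=
    fun f t ht => (dist_triangle _ y₀ x₀).trans <| by
      linarith [dist_picard_le (y₀ := y₀) ht₀ ht hm.abs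
        (hmF.mono fun s hs => (hs _ (hmem f s)).trans (le_abs_self _))]
  let Φ : C(Icc c d, closedBall x₀ r) → C(Icc c d, closedBall x₀ r) := fun f =>
    ⟨fun t => ⟨picard F t₀ y₀ (extend f) t, hpicard_mem f t t.2⟩,
      ((continuousOn_picard (hint f) ht₀).domRestrict).subtype_mk _⟩
  have hΦ : ContractingWith K Φ := by
    refine ⟨hK, LipschitzWith.of_dist_le_mul fun f f' =>
      (ContinuousMap.dist_le (by positivity)).2 fun t => ?_⟩
    have hLD : ∀ᵐ s ∂(volume.restrict (Icc c d)),
        ‖F s (extend f s) - F s (extend f' s)‖ ≤ |L s| * dist f f' := hLF.mono fun s hs =>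
      (hs _ (hmem f s) _ (hmem f' s)).trans <| mul_le_mul (le_abs_self _) (by
        rw [← dist_eq_norm, ← Subtype.dist_eq]; exact ContinuousMap.dist_apply_le_dist _)
        (norm_nonneg _) (abs_nonneg _)
    calc dist (Φ f t) (Φ f' t)
        = dist (picard F t₀ y₀ (extend f) t) (picard F t₀ y₀ (extend f') t) := rfl
      _ ≤ ∫ s in Icc c d, |L s| * dist f f' :=
        dist_picard_picard_le (hint f) (hint f') ht₀ t.2 (hL.abs.mul_const _) hLD
      _ = (∫ s in Icc c d, |L s|) * dist f f' := integral_mul_const _ _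
      _ ≤ K * dist f f' := by gcongr
  have : Nonempty C(Icc c d, closedBall x₀ r) := ⟨.const _ ⟨y₀, by
    simpa using (le_add_of_nonneg_right (integral_nonneg fun _ => abs_nonneg _)).trans hy₀⟩⟩
  set f := ContractingWith.fixedPoint Φ hΦ
  refine ⟨extend f, hcont f, fun t _ => hmem f t, fun t ht => ?_⟩
  calc extend f t = f ⟨t, ht⟩ := by simp only [extend, projIcc_of_mem hcd ht]
    _ = Φ f ⟨t, ht⟩ := by rw [hΦ.fixedPoint_isFixedPt]
    _ = picard F t₀ y₀ (extend f) t := rfl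

theorem eqOn_of_eqOn_picard_of_integral_lt_one
    (hxF : IntegrableOn (fun s => F s (x s)) (Icc c d))
    (hx'F : IntegrableOn (fun s => F s (x' s)) (Icc c d)) (hL : IntegrableOn L (Icc c d))
    (hLF : ∀ᵐ s ∂(volume.restrict (Icc c d)), ‖F s (x s) - F s (x' s)‖ ≤ L s * ‖x s - x' s‖)
    (hL1 : ∫ s in Icc c d, |L s| < 1) (ht₀ : t₀ ∈ Icc c d)
    (hx : EqOn x (picard F t₀ y₀ x) (Icc c d)) (hx' : EqOn x' (picard F t₀ y₀ x') (Icc c d)) :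
    EqOn x x' (Icc c d) := by
  have hxc : ContinuousOn x (Icc c d) := (continuousOn_picard hxF ht₀).congr hx
  have hx'c : ContinuousOn x' (Icc c d) := (continuousOn_picard hx'F ht₀).congr hx'
  obtain ⟨τ, hτ, hmax⟩ := isCompact_Icc.exists_isMaxOn ⟨t₀, ht₀⟩ (hxc.sub hx'c).norm
  have hLτ : ∀ᵐ s ∂(volume.restrict (Icc c d)),
      ‖F s (x s) - F s (x' s)‖ ≤ |L s| * ‖x τ - x' τ‖ := by
    filter_upwards [hLF, ae_restrict_mem measurableSet_Icc] with s hs hsJ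
    exact hs.trans (mul_le_mul (le_abs_self _) (hmax hsJ) (norm_nonneg _) (abs_nonneg _))
  have hτ_le : ‖x τ - x' τ‖ ≤ (∫ s in Icc c d, |L s|) * ‖x τ - x' τ‖ :=
    calc ‖x τ - x' τ‖ = dist (picard F t₀ y₀ x τ) (picard F t₀ y₀ x' τ) := by
          rw [← hx hτ, ← hx' hτ, dist_eq_norm]
      _ ≤ ∫ s in Icc c d, |L s| * ‖x τ - x' τ‖ :=
          dist_picard_picard_le hxF hx'F ht₀ hτ (hL.abs.mul_const _) hLτ
      _ = (∫ s in Icc c d, |L s|) * ‖x τ - x' τ‖ := integral_mul_const _ _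
  have hτ_zero : ‖x τ - x' τ‖ ≤ 0 := by nlinarith [norm_nonneg (x τ - x' τ)]
  exact fun t ht => sub_eq_zero.1 (norm_le_zero_iff.1 ((hmax ht).trans hτ_zero))

theorem eqOn_of_eqOn_picard (hxF : IntegrableOn (fun s => F s (x s)) (Icc c d))
    (hx'F : IntegrableOn (fun s => F s (x' s)) (Icc c d)) (hL : IntegrableOn L (Icc c d))
    (hLF : ∀ᵐ s ∂(volume.restrict (Icc c d)), ‖F s (x s) - F s (x' s)‖ ≤ L s * ‖x s - x' s‖)
    (ht₀ : t₀ ∈ Icc c d) (hx : EqOn x (picard F t₀ y₀ x) (Icc c d))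
    (hx' : EqOn x' (picard F t₀ y₀ x') (Icc c d)) : EqOn x x' (Icc c d) := by
  refine eqOn_of_isPreconnected_of_eventuallyEq isPreconnected_Icc
    ((continuousOn_picard hxF ht₀).congr hx) ((continuousOn_picard hx'F ht₀).congr hx') ht₀
    (by rw [hx ht₀, hx' ht₀]; simp [picard]) fun t₁ ht₁ hxx' => ?_
  obtain ⟨ε, hε, hsmall⟩ := exists_pos_setIntegral_Icc_inter_lt hL.abs t₁ one_pos
  rw [Icc_inter_Icc] at hsmall
  have hsub : Icc ((t₁ - ε) ⊔ c) ((t₁ + ε) ⊓ d) ⊆ Icc c d :=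
    Icc_subset_Icc le_sup_right inf_le_right
  have ht₁' : t₁ ∈ Icc ((t₁ - ε) ⊔ c) ((t₁ + ε) ⊓ d) :=
    ⟨sup_le (by linarith) ht₁.1, le_inf (by linarith) ht₁.2⟩
  have hnhds : Icc ((t₁ - ε) ⊔ c) ((t₁ + ε) ⊓ d) ∈ 𝓝[Icc c d] t₁ := by
    rw [← Icc_inter_Icc, inter_comm]
    exact inter_mem_nhdsWithin _ (Icc_mem_nhds (sub_lt_self t₁ hε) (lt_add_of_pos_right t₁ hε))
  refine mem_of_superset hnhds (eqOn_of_eqOn_picard_of_integral_lt_one (hxF.mono_set hsub)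
    (hx'F.mono_set hsub) (hL.mono_set hsub) (ae_restrict_of_ae_restrict_of_subset hsub hLF)
    hsmall ht₁' ((eqOn_picard_of_eqOn_picard hxF ht₀ hx ht₁).mono hsub) ?_)
  rw [hxx']
  exact (eqOn_picard_of_eqOn_picard hx'F ht₀ hx' ht₁).mono hsub

theorem eqOn_of_eqOn_picard_of_mapsTo (hF : IsCaratheodory F (volume.restrict (Icc c d)))
    (hm : IntegrableOn m (Icc c d)) (hL : IntegrableOn L (Icc c d))
    (hmF : ∀ᵐ t ∂(volume.restrict (Icc c d)), ∀ y ∈ B, ‖F t y‖ ≤ m t)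
    (hLF : ∀ᵐ t ∂(volume.restrict (Icc c d)), ∀ y ∈ B, ∀ z ∈ B,
      ‖F t y - F t z‖ ≤ L t * ‖y - z‖)
    (hxc : ContinuousOn x (Icc c d)) (hx'c : ContinuousOn x' (Icc c d))
    (hxB : MapsTo x (Icc c d) B) (hx'B : MapsTo x' (Icc c d) B) (ht₀ : t₀ ∈ Icc c d)
    (hx : EqOn x (picard F t₀ y₀ x) (Icc c d)) (hx' : EqOn x' (picard F t₀ y₀ x') (Icc c d)) :
    EqOn x x' (Icc c d) := by
  refine eqOn_of_eqOn_picard (hF.integrableOn_comp hxc hxB hm hmF)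
    (hF.integrableOn_comp hx'c hx'B hm hmF) hL ?_ ht₀ hx hx'
  filter_upwards [hLF, ae_restrict_mem measurableSet_Icc] with t ht htJ
  exact ht _ (hxB htJ) _ (hx'B htJ)

end Picard

theorem banach_ode_local_existence_general
    {X : Type*} [NormedAddCommGroup X] [NormedSpace ℝ X] [CompleteSpace X]
    {a b : ℝ}
    (F : ℝ → X → X)
    (hFmeas : ∀ x : X, AEStronglyMeasurable (fun t => F t x) (volume.restrict (Icc a b)))
    (hFcont : ∀ᵐ t ∂(volume.restrict (Icc a b)), Continuous (fun x => F t x))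
    (p : ℝ≥0∞) (hp : 1 ≤ p)
    (hbound : ∀ B : Set X, Bornology.IsBounded B →
      ∃ m L : ℝ → ℝ, MemLp m p (volume.restrict (Icc a b)) ∧
        IntegrableOn L (Icc a b) ∧
        (∀ᵐ t ∂(volume.restrict (Icc a b)), ∀ x ∈ B, ‖F t x‖ ≤ m t) ∧
        (∀ᵐ t ∂(volume.restrict (Icc a b)), ∀ x ∈ B, ∀ y ∈ B,
          ‖F t x - F t y‖ ≤ L t * ‖x - y‖)) :
    ∀ t₀ ∈ Icc a b, ∀ x₀ : X, ∀ R : ℝ, 0 < R →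
      ∃ δ > 0,
        ∀ y₀ ∈ Metric.closedBall x₀ R,
          ∃ x : ℝ → X,
            (ContinuousOn x (Icc (t₀ - δ) (t₀ + δ) ∩ Icc a b) ∧
              (∀ t ∈ Icc (t₀ - δ) (t₀ + δ) ∩ Icc a b,
                x t = y₀ + ∫ s in t₀..t, F s (x s)) ∧
              MemLp (fun t => F t (x t)) p
                (volume.restrict (Icc (t₀ - δ) (t₀ + δ) ∩ Icc a b))) ∧
            ∀ x' : ℝ → X,
              ContinuousOn x' (Icc (t₀ - δ) (t₀ + δ) ∩ Icc a b) →
              (∀ t ∈ Icc (t₀ - δ) (t₀ + δ) ∩ Icc a b,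
                x' t = y₀ + ∫ s in t₀..t, F s (x' s)) →
              ∀ t ∈ Icc (t₀ - δ) (t₀ + δ) ∩ Icc a b, x' t = x t := by
  intro t₀ ht₀ x₀ R hR
  obtain ⟨m, L, hm, hL, hmF, hLF⟩ := hbound (closedBall x₀ (R + 1)) isBounded_closedBall
  obtain ⟨δ, hδ, hsmall⟩ :=
    exists_pos_setIntegral_Icc_inter_lt ((hm.integrable hp).abs.add hL.abs) t₀ one_half_pos
  refine ⟨δ, hδ, fun y₀ hy₀ => ?_⟩
  rw [Icc_inter_Icc] at hsmall ⊢
  set J := Icc ((t₀ - δ) ⊔ a) ((t₀ + δ) ⊓ b)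
  have hJ : J ⊆ Icc a b := Icc_subset_Icc le_sup_right inf_le_right
  have ht₀J : t₀ ∈ J := ⟨sup_le (by linarith) ht₀.1, le_inf (by linarith) ht₀.2⟩
  have hF : IsCaratheodory F (volume.restrict J) :=
    (IsCaratheodory.mk hFmeas hFcont).mono (Measure.restrict_mono hJ le_rfl)
  have hmJ : IntegrableOn m J := IntegrableOn.mono_set (hm.integrable hp) hJ
  have hmL : (∫ t in J, |m t|) + ∫ t in J, |L t| < 1 / 2 := by
    rwa [← integral_add hmJ.abs (hL.mono_set hJ).abs]
  have hm₀ : 0 ≤ ∫ t in J, |m t| := integral_nonneg fun _ => abs_nonneg _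
  have hL₀ : 0 ≤ ∫ t in J, |L t| := integral_nonneg fun _ => abs_nonneg _
  obtain ⟨x, hxc, hxB, hx⟩ := exists_continuous_eqOn_picard (K := 1 / 2) hF ht₀J hmJ
    (hL.mono_set hJ) (ae_restrict_of_ae_restrict_of_subset hJ hmF)
    (ae_restrict_of_ae_restrict_of_subset hJ hLF)
    (by linarith [mem_closedBall.1 hy₀]) (by norm_num; linarith) (by norm_num)
  refine ⟨x, ⟨hxc.continuousOn, hx, hF.memLp_comp hxc.continuousOn hxB
    (hm.mono_measure (Measure.restrict_mono hJ le_rfl))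
    (ae_restrict_of_ae_restrict_of_subset hJ hmF)⟩, fun x' hx'c hx' => ?_⟩
  obtain ⟨m', L', hm', hL', hm'F, hL'F⟩ := hbound (closedBall x₀ (R + 1) ∪ x' '' J)
    (isBounded_closedBall.union (isCompact_Icc.image_of_continuousOn hx'c).isBounded)
  exact (eqOn_of_eqOn_picard_of_mapsTo hF (IntegrableOn.mono_set (hm'.integrable hp) hJ)
    (hL'.mono_set hJ) (ae_restrict_of_ae_restrict_of_subset hJ hm'F)
    (ae_restrict_of_ae_restrict_of_subset hJ hL'F)
    hxc.continuousOn hx'c (hxB.mono_right subset_union_left)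
    ((mapsTo_image x' J).mono_right subset_union_right) ht₀J hx hx').symm

/-- Local existence and uniqueness for the Banach-space valued ODE `x' = F(t,x)`
(Theorem B.2 of the paper): for a Carathéodory right-hand side `F` that is locally
bounded by `L^p` functions and locally Lipschitz with `L¹` Lipschitz functions on
bounded sets, around every `t₀ ∈ I`, `x₀ ∈ X` and `R > 0` there is `δ > 0` such that
for every initial value `y₀` in the closed ball of radius `R` around `x₀` there is a
unique continuous solution of `x(t) = y₀ + ∫_{t₀}^t F(s, x(s)) ds` on
`I_δ = [t₀−δ, t₀+δ] ∩ I`, and `t ↦ F(t, x(t)) ∈ L^p(I_δ, X)`. -/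
theorem banach_ode_local_existence
    {X : Type*} [NormedAddCommGroup X] [NormedSpace ℝ X] [CompleteSpace X]
    {a b : ℝ} (hab : a ≤ b)
    (F : ℝ → X → X)
    (hFmeas : ∀ x : X, AEStronglyMeasurable (fun t => F t x) (volume.restrict (Icc a b)))
    (hFcont : ∀ᵐ t ∂(volume.restrict (Icc a b)), Continuous (fun x => F t x))
    (p : ℝ≥0∞) (hp : 1 ≤ p)
    (hbound : ∀ B : Set X, Bornology.IsBounded B →
      ∃ m L : ℝ → ℝ, MemLp m p (volume.restrict (Icc a b)) ∧
        IntegrableOn L (Icc a b) ∧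
        (∀ᵐ t ∂(volume.restrict (Icc a b)), ∀ x ∈ B, ‖F t x‖ ≤ m t) ∧
        (∀ᵐ t ∂(volume.restrict (Icc a b)), ∀ x ∈ B, ∀ y ∈ B,
          ‖F t x - F t y‖ ≤ L t * ‖x - y‖)) :
    ∀ t₀ ∈ Icc a b, ∀ x₀ : X, ∀ R : ℝ, 0 < R →
      ∃ δ > 0,
        ∀ y₀ ∈ Metric.closedBall x₀ R,
          ∃ x : ℝ → X,
            (ContinuousOn x (Icc (t₀ - δ) (t₀ + δ) ∩ Icc a b) ∧
              (∀ t ∈ Icc (t₀ - δ) (t₀ + δ) ∩ Icc a b,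
                x t = y₀ + ∫ s in t₀..t, F s (x s)) ∧
              MemLp (fun t => F t (x t)) p
                (volume.restrict (Icc (t₀ - δ) (t₀ + δ) ∩ Icc a b))) ∧
            ∀ x' : ℝ → X,
              ContinuousOn x' (Icc (t₀ - δ) (t₀ + δ) ∩ Icc a b) →
              (∀ t ∈ Icc (t₀ - δ) (t₀ + δ) ∩ Icc a b,
                x' t = y₀ + ∫ s in t₀..t, F s (x' s)) →
              ∀ t ∈ Icc (t₀ - δ) (t₀ + δ) ∩ Icc a b, x' t = x t :=
  banach_ode_local_existence_general F hFmeas hFcont p hp hbound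
end

section
/- Let I_δ ⊂ ℝ be a compact interval containing t₀, θ > 0, and K: I_δ×ℝ → ℝ a function such that K(t,y) ≥ 0 for all t ∈ I_δ whenever y ≥ 0. Suppose x: I_δ → ℝ is continuous, x(t₀) ∈ [0,θ], the function s ↦ K(s, x(s))·(1 − x(s)/θ) is Lebesgue integrable on I_δ, and x(t) = x(t₀) + ∫_{t₀}^t K(s, x(s))·(1 − x(s)/θ) ds for all t ∈ I_δ. If x(s₀) ∈ (0, θ] for some s₀ ∈ I_δ, then x(t) ∈ [x(s₀), θ] for all t ∈ I_δ with t ≥ s₀. -/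
/-!
While `x` lies in `[0, θ]` the drift `K(t,x)(1 - x/θ)` is nonnegative, and above `θ` it is
nonpositive. Hence `x` cannot rise above `θ` after `s₀` (running time backwards from a point above
`θ` to the last visit of `θ`, the solution could only have decreased), and it cannot fall below
any level `c ∈ [0, x(s₀))` (up to its first visit of `c` it is nondecreasing).
-/

open MeasureTheory Set

section Barriers

variable {x f : ℝ → ℝ} {u v e : ℝ}

theorem exists_first_eq_of_le_of_le (huv : u ≤ v) (hx : ContinuousOn x (Icc u v))
    (hu : e ≤ x u) (hv : x v ≤ e) : ∃ τ ∈ Icc u v, x τ = e ∧ ∀ s ∈ Icc u τ, e ≤ x s := by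
  set S := Icc u v ∩ x ⁻¹' Iic e
  have hbdd : BddBelow S := ⟨u, fun s hs => hs.1.1⟩
  have hS : sInf S ∈ S :=
    (hx.preimage_isClosed_of_isClosed isClosed_Icc isClosed_Iic).csInf_mem
      ⟨v, ⟨huv, le_rfl⟩, hv⟩ hbdd
  obtain ⟨σ, hσ, hxσ⟩ := intermediate_value_Icc' hS.1.1
    (hx.mono (Icc_subset_Icc le_rfl hS.1.2)) ⟨hS.2, hu⟩
  have hστ : σ = sInf S :=
    le_antisymm hσ.2 (csInf_le hbdd ⟨⟨hσ.1, hσ.2.trans hS.1.2⟩, hxσ.le⟩)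
  refine ⟨sInf S, hS.1, hστ ▸ hxσ, fun s hs => le_of_not_gt fun hlt => ?_⟩
  have hsτ : s = sInf S :=
    le_antisymm hs.2 (csInf_le hbdd ⟨⟨hs.1, hs.2.trans hS.1.2⟩, hlt.le⟩)
  exact hlt.ne (hsτ ▸ hστ ▸ hxσ)

theorem lt_of_drift_nonneg (huv : u ≤ v) (hx : ContinuousOn x (Icc u v))
    (hsol : ∀ b ∈ Icc u v, x b = x u + ∫ s in u..b, f s)
    (hf : ∀ s ∈ Icc u v, e ≤ x s → 0 ≤ f s) (he : e < x u) : e < x v := by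
  by_contra! hv
  obtain ⟨τ, hτ, hxτ, habove⟩ := exists_first_eq_of_le_of_le huv hx he.le hv
  have hint : 0 ≤ ∫ s in u..τ, f s := intervalIntegral.integral_nonneg hτ.1
    fun s hs => hf s ⟨hs.1, hs.2.trans hτ.2⟩ (habove s hs)
  linarith [hsol τ hτ]

/-- Time reversal of `lt_of_drift_nonneg`: `s ↦ x (-s)` solves the equation with drift
`s ↦ -f (-s)`. -/
theorem lt_of_drift_nonpos (huv : u ≤ v) (hx : ContinuousOn x (Icc u v))
    (hsol : ∀ b ∈ Icc u v, x v = x b + ∫ s in b..v, f s)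
    (hf : ∀ s ∈ Icc u v, e ≤ x s → f s ≤ 0) (he : e < x v) : e < x u := by
  have hneg : ∀ {s}, s ∈ Icc (-v) (-u) → -s ∈ Icc u v := fun hs =>
    ⟨le_neg_of_le_neg hs.2, neg_le_of_neg_le hs.1⟩
  have := lt_of_drift_nonneg (x := fun s => x (-s)) (f := fun s => -f (-s)) (e := e)
    (neg_le_neg huv) (hx.comp continuousOn_neg fun _ => hneg) (fun b hb => ?_)
    (fun s hs h => neg_nonneg.2 (hf _ (hneg hs) h)) (by simpa using he)
  · simpa using this
  · rw [intervalIntegral.integral_neg, intervalIntegral.integral_comp_neg, neg_neg, hsol _ (hneg hb)]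
    ring

end Barriers

theorem logistic_drift_nonneg {k y θ : ℝ} (hθ : 0 < θ) (hk : 0 ≤ k) (hy : y ≤ θ) :
    0 ≤ k * (1 - y / θ) :=
  mul_nonneg hk (sub_nonneg.2 ((div_le_one hθ).2 hy))

theorem logistic_drift_nonpos {k y θ : ℝ} (hθ : 0 < θ) (hk : 0 ≤ k) (hy : θ ≤ y) :
    k * (1 - y / θ) ≤ 0 :=
  mul_nonpos_of_nonneg_of_nonpos hk (sub_nonpos.2 ((one_le_div hθ).2 hy))

theorem eq_add_integral_of_basepoint {x f : ℝ → ℝ} {α β t₀ : ℝ}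
    (hint : IntegrableOn f (Icc α β))
    (hsol : ∀ t ∈ Icc α β, x t = x t₀ + ∫ s in t₀..t, f s) (ht₀ : t₀ ∈ Icc α β) :
    ∀ a ∈ Icc α β, ∀ b ∈ Icc α β, x b = x a + ∫ s in a..b, f s := by
  intro a ha b hb
  have hii : ∀ c ∈ Icc α β, IntervalIntegrable f volume t₀ c := fun c hc =>
    (hint.mono_set (uIcc_subset_Icc ht₀ hc)).intervalIntegrable
  rw [← intervalIntegral.integral_interval_sub_left (hii b hb) (hii a ha), hsol a ha, hsol b hb]
  ring

theorem lower_barrier_general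
    {α β t₀ θ : ℝ} (ht₀ : t₀ ∈ Icc α β) (hθ : 0 < θ)
    (K : ℝ → ℝ → ℝ)
    (hK : ∀ t ∈ Icc α β, ∀ y : ℝ, 0 ≤ y → 0 ≤ K t y)
    (x : ℝ → ℝ) (hxc : ContinuousOn x (Icc α β))
    (hint : IntegrableOn (fun s => K s (x s) * (1 - x s / θ)) (Icc α β))
    (hsol : ∀ t ∈ Icc α β, x t = x t₀ + ∫ s in t₀..t, K s (x s) * (1 - x s / θ)) :
    ∀ s₀ ∈ Icc α β, x s₀ ∈ Ioc 0 θ →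
      ∀ t ∈ Icc α β, s₀ ≤ t → x t ∈ Icc (x s₀) θ := by
  intro s₀ hs₀ hxs₀ t ht hst
  have hsub : Icc s₀ t ⊆ Icc α β := Icc_subset_Icc hs₀.1 ht.2
  have hstep := eq_add_integral_of_basepoint hint hsol ht₀
  have hle : ∀ s ∈ Icc s₀ t, x s ≤ θ := by
    intro s hs
    have hsub' : Icc s₀ s ⊆ Icc α β := (Icc_subset_Icc_right hs.2).trans hsub
    by_contra! hθs
    have := lt_of_drift_nonpos hs.1 (hxc.mono hsub')
      (fun b hb => hstep b (hsub' hb) s (hsub hs))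
      (fun r hr hθr => logistic_drift_nonpos hθ (hK r (hsub' hr) _ (hθ.le.trans hθr)) hθr) hθs
    exact this.not_ge hxs₀.2
  refine ⟨le_of_forall_lt fun c hc => (le_max_left c 0).trans_lt ?_, hle t ⟨hst, le_rfl⟩⟩
  exact lt_of_drift_nonneg hst (hxc.mono hsub) (fun b hb => hstep s₀ hs₀ b (hsub hb))
    (fun s hs hcs => logistic_drift_nonneg hθ (hK s (hsub hs) _ ((le_max_right c 0).trans hcs))
      (hle s hs))
    (max_lt hc hxs₀.1)

/-- Lower barrier / monotone trapping for the logistic-type ODE `x' = K(t,x)(1 − x/θ)`: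
if `K(t,y) ≥ 0` whenever `y ≥ 0`, `x` is a continuous solution of the integral
equation on the compact interval `I_δ = [α, β] ∋ t₀` with `x(t₀) ∈ [0, θ]`, and
`x(s₀) ∈ (0, θ]` for some `s₀ ∈ I_δ`, then `x(t) ∈ [x(s₀), θ]` for all `t ∈ I_δ`
with `t ≥ s₀`. -/
theorem lower_barrier
    {α β t₀ θ : ℝ} (hαβ : α ≤ β) (ht₀ : t₀ ∈ Icc α β) (hθ : 0 < θ)
    (K : ℝ → ℝ → ℝ)
    (hK : ∀ t ∈ Icc α β, ∀ y : ℝ, 0 ≤ y → 0 ≤ K t y)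
    (x : ℝ → ℝ) (hxc : ContinuousOn x (Icc α β))
    (hx0 : x t₀ ∈ Icc 0 θ)
    (hint : IntegrableOn (fun s => K s (x s) * (1 - x s / θ)) (Icc α β))
    (hsol : ∀ t ∈ Icc α β, x t = x t₀ + ∫ s in t₀..t, K s (x s) * (1 - x s / θ)) :
    ∀ s₀ ∈ Icc α β, x s₀ ∈ Ioc 0 θ →
      ∀ t ∈ Icc α β, s₀ ≤ t → x t ∈ Icc (x s₀) θ :=
  lower_barrier_general ht₀ hθ K hK x hxc hint hsol
end

section
/- Let K be a compact metric space, I = [0,T] a compact interval, N ≥ 1, and ρ ∈ C(K,ℝ) with c_P ≤ ρ(x) ≤ C_P for all x ∈ K, where 0 < c_P < C_P < 1. Let a: I → C(K,ℝ)^N be strongly measurable with a_j(t)(x) ≥ 0 for a.e. t ∈ I, all x ∈ K and j = 1,…,N, and let b: I → C(K,ℝ) be continuous with 0 ≤ b(t)(x) ≤ 1. Let H: ℝ^{N+2} → ℝ be locally Lipschitz with H(a₁,…,a_N, b, c) ≥ 0 whenever all arguments a₁,…,a_N, b, c are nonnegative. Assume there exists p ∈ [1,∞] such that for every bounded set B ⊂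 C(K,ℝ) there are m_B ∈ L^p(I) and L_B ∈ L¹(I) with sup_{x∈K} |H(a(t)(x), b(t)(x), c̃(x))| ≤ m_B(t) and sup_{x∈K} |H(a(t)(x), b(t)(x), c̃(x)) − H(a(t)(x), b(t)(x), ĉ(x))| ≤ L_B(t)·‖c̃ − ĉ‖_{C(K)} for a.e. t ∈ I and all c̃, ĉ ∈ B. Then there exists a unique continuous function c: I → C(K,ℝ) such that the integrand t ↦ ( x ↦ H(a(t)(x), b(t)(x), c(t)(x))·(1 − c(t)(x)/(1 − ρ(x))) ) belongs to L^p(I, C(K,ℝ)) and c(t) = ∫₀ᵗ H(a(s), b(s), c(s))·(1 − c(s)/(1 − ρ)) ds (Bochner integral in C(K,ℝ)) for all t ∈ I, i.e. c solves d_t c = H(a, b, c)(1 − c/(1 − ρ)) with c(0) = 0; moreover this solution satisfies 0 ≤ c(t)(x) ≤ 1 − ρ(x) for all t ∈ I and x ∈ K. -/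
open MeasureTheory Set
open scoped ENNReal

/-- `IsCellSol T ρ a b H p c` says that the continuous curve `c : I → C(K,ℝ)` solves
the cell ODE `d_t c = H(a₁,…,a_N, b, c)(1 − c/(1 − ρ))` with `c(0) = 0` in integrated
form: there is an integrand `F ∈ L^p(I, C(K,ℝ))` given pointwise by
`F(t)(x) = H(a₁(t)(x),…,a_N(t)(x), b(t)(x), c(t)(x))(1 − c(t)(x)/(1 − ρ(x)))` with
`c(t) = ∫₀ᵗ F(s) ds` (Bochner integral in `C(K,ℝ)`) for all `t ∈ I = [0,T]`. -/
def IsCellSol {K : Type*} [MetricSpace K] [CompactSpace K] {N : ℕ}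
    (T : ℝ) (ρ : C(K, ℝ)) (a : ℝ → Fin N → C(K, ℝ)) (b : ℝ → C(K, ℝ))
    (H : (Fin N → ℝ) → ℝ → ℝ → ℝ) (p : ℝ≥0∞) (c : ℝ → C(K, ℝ)) : Prop :=
  ContinuousOn c (Icc 0 T) ∧
  ∃ F : ℝ → C(K, ℝ),
    (∀ t ∈ Icc (0:ℝ) T, ∀ x : K,
      F t x = H (fun j => a t j x) (b t x) (c t x) * (1 - c t x / (1 - ρ x))) ∧
    MemLp F p (volume.restrict (Icc 0 T)) ∧
    ∀ t ∈ Icc (0:ℝ) T, c t = ∫ s in (0:ℝ)..t, F s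

/-!
The rate `H(a, b, c)(1 − c/(1 − ρ))` is only locally Lipschitz in `c`, so `c` is first replaced in
it by its truncation to the band `[0, 1 − ρ]`. The truncated rate is Lipschitz on all of `C(K,ℝ)`
with an integrable constant `Λ`, and the `n`-th iterate of its Picard map contracts distances by
`λ(T)^n / n!` with `λ(t) = ∫₀ᵗ Λ`; the factorial comes from `∫₀ᵗ Λ λ^n = λ(t)^(n+1)/(n+1)`, the
fundamental theorem of calculus for the absolutely continuous function `λ^(n+1)`. At each `x ∈ K`
the resulting solution is the primitive of a function that is nonnegative and vanishes as soon as
the solution exceeds `1 − ρ(x)`, so it stays in the band, where the truncation does nothing.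
Uniqueness is Gronwall's lemma, proved by the same iterated estimate, with the Lipschitz constant
of `H` on a ball containing both solutions.
-/

open Filter Topology
open scoped Nat

theorem AbsolutelyContinuousOnInterval.pow {f : ℝ → ℝ} {a b : ℝ}
    (hf : AbsolutelyContinuousOnInterval f a b) (n : ℕ) :
    AbsolutelyContinuousOnInterval (fun x => f x ^ n) a b := by
  induction n with
  | zero =>
    simpa using
      (LipschitzWith.const (α := ℝ) (1 : ℝ)).lipschitzOnWith.absolutelyContinuousOnInterval
        (a := a) (b := b)
  | succ n ih => simpa only [pow_succ] using ih.fun_mul hf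

theorem integral_mul_primitive_pow {Λ : ℝ → ℝ} {a b : ℝ} (hΛ : IntervalIntegrable Λ volume a b)
    (n : ℕ) :
    ∫ s in a..b, Λ s * (∫ u in a..s, Λ u) ^ n = (∫ u in a..b, Λ u) ^ (n + 1) / (n + 1) := by
  have hftc := ((hΛ.absolutelyContinuousOnInterval_intervalIntegral left_mem_uIcc).pow
    (n + 1)).integral_deriv_eq_sub
  rw [intervalIntegral.integral_same, zero_pow n.succ_ne_zero, sub_zero] at hftc
  rw [eq_div_iff (by positivity), ← hftc, ← intervalIntegral.integral_mul_const]
  refine intervalIntegral.integral_congr_ae ?_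
  filter_upwards [hΛ.ae_hasDerivAt_integral] with x hx hxI
  rw [((hx (uIoc_subset_uIcc hxI) a left_mem_uIcc).fun_pow (n + 1)).deriv]
  push_cast
  ring

theorem MeasureTheory.IntegrableOn.intervalIntegrable_of_mem_Icc_s11 {E : Type*}
    [NormedAddCommGroup E] {f : ℝ → E} {a b s t : ℝ} (hf : IntegrableOn f (Icc a b))
    (hs : s ∈ Icc a b) (ht : t ∈ Icc a b) : IntervalIntegrable f volume s t :=
  (hf.mono_set (uIcc_subset_Icc hs ht)).intervalIntegrable

theorem MeasureTheory.IntegrableOn.continuousOn_primitive {E : Type*} [NormedAddCommGroup E]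
    [NormedSpace ℝ E] {f : ℝ → E} {a b : ℝ} (hf : IntegrableOn f (Icc a b)) (hab : a ≤ b) :
    ContinuousOn (fun t => ∫ s in a..t, f s) (Icc a b) := by
  rw [← uIcc_of_le hab] at hf ⊢
  exact intervalIntegral.continuousOn_primitive_interval hf

section Gronwall

variable {T M : ℝ} {Λ : ℝ → ℝ}

theorem le_mul_primitive_pow_div_factorial {u : ℕ → ℝ → ℝ}
    (hΛ0 : ∀ s, 0 ≤ Λ s) (hΛ : IntegrableOn Λ (Icc 0 T))
    (hu : ∀ n, ContinuousOn (u n) (Icc 0 T)) (hu0 : ∀ t ∈ Icc 0 T, u 0 t ≤ M)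
    (hstep : ∀ n, ∀ t ∈ Icc 0 T, u (n + 1) t ≤ ∫ s in 0..t, Λ s * u n s) (n : ℕ) :
    ∀ t ∈ Icc 0 T, u n t ≤ M * (∫ s in 0..t, Λ s) ^ n / n ! := by
  induction n with
  | zero => simpa using hu0
  | succ n ih =>
    intro t ht
    have h0 : (0 : ℝ) ∈ Icc 0 T := ⟨le_rfl, ht.1.trans ht.2⟩
    have hsub : Icc 0 t ⊆ Icc 0 T := Icc_subset_Icc le_rfl ht.2
    have hprim : ContinuousOn (fun s => M * (∫ v in 0..s, Λ v) ^ n / n !) (Icc 0 T) :=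
      ((hΛ.continuousOn_primitive h0.2).pow n |>.const_smul M).div_const _
    calc u (n + 1) t ≤ ∫ s in 0..t, Λ s * u n s := hstep n t ht
      _ ≤ ∫ s in 0..t, Λ s * (M * (∫ v in 0..s, Λ v) ^ n / n !) := by
        refine intervalIntegral.integral_mono_on ht.1
          ((hΛ.mul_continuousOn (hu n) isCompact_Icc).intervalIntegrable_of_mem_Icc_s11 h0 ht)
          ((hΛ.mul_continuousOn hprim isCompact_Icc).intervalIntegrable_of_mem_Icc_s11 h0 ht)
          fun s hs => mul_le_mul_of_nonneg_left (ih s (hsub hs)) (hΛ0 s)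
      _ = M / n ! * ∫ s in 0..t, Λ s * (∫ v in 0..s, Λ v) ^ n := by
        rw [← intervalIntegral.integral_const_mul]
        congr 1 with s
        ring
      _ = M * (∫ s in 0..t, Λ s) ^ (n + 1) / (n + 1)! := by
        rw [integral_mul_primitive_pow (hΛ.intervalIntegrable_of_mem_Icc_s11 h0 ht),
          Nat.factorial_succ]
        push_cast
        field_simp

theorem nonpos_of_le_integral_mul {u : ℝ → ℝ} (hΛ0 : ∀ s, 0 ≤ Λ s)
    (hΛ : IntegrableOn Λ (Icc 0 T)) (hu : ContinuousOn u (Icc 0 T))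
    (hle : ∀ t ∈ Icc 0 T, u t ≤ ∫ s in 0..t, Λ s * u s) :
    ∀ t ∈ Icc 0 T, u t ≤ 0 := by
  intro t ht
  obtain ⟨M, hM⟩ := isCompact_Icc.exists_bound_of_continuousOn hu
  have hlim : Tendsto (fun n => M * (∫ s in 0..t, Λ s) ^ n / n !) atTop (𝓝 0) := by
    simpa [mul_div_assoc] using (FloorSemiring.tendsto_pow_div_factorial_atTop _).const_mul M
  refine ge_of_tendsto hlim (Eventually.of_forall fun n => ?_)
  exact le_mul_primitive_pow_div_factorial hΛ0 hΛ (fun _ => hu)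
    (fun s hs => (le_abs_self _).trans (hM s hs)) (fun _ => hle) n t ht

end Gronwall

section IntegralEquation

variable {E : Type*} [NormedAddCommGroup E] [NormedSpace ℝ E] {T : ℝ} {Λ : ℝ → ℝ}

theorem norm_integral_sub_integral_le {F F' : ℝ → E} {w : ℝ → ℝ} {t : ℝ} (ht : t ∈ Icc 0 T)
    (hF : IntegrableOn F (Icc 0 T)) (hF' : IntegrableOn F' (Icc 0 T))
    (hw : IntegrableOn w (Icc 0 T))
    (hle : ∀ᵐ s ∂(volume.restrict (Icc 0 T)), ‖F' s - F s‖ ≤ w s) :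
    ‖(∫ s in 0..t, F' s) - ∫ s in 0..t, F s‖ ≤ ∫ s in 0..t, w s := by
  have h0 : (0 : ℝ) ∈ Icc 0 T := ⟨le_rfl, ht.1.trans ht.2⟩
  rw [← intervalIntegral.integral_sub (hF'.intervalIntegrable_of_mem_Icc_s11 h0 ht)
    (hF.intervalIntegrable_of_mem_Icc_s11 h0 ht)]
  refine intervalIntegral.norm_integral_le_of_norm_le ht.1 ?_
    (hw.intervalIntegrable_of_mem_Icc_s11 h0 ht)
  filter_upwards [(ae_restrict_iff' measurableSet_Icc).1 hle] with s hs hsI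
  exact hs ⟨hsI.1.le, hsI.2.trans ht.2⟩

theorem eqOn_of_norm_integrand_sub_le {c c' F F' : ℝ → E} (hΛ0 : ∀ s, 0 ≤ Λ s)
    (hΛ : IntegrableOn Λ (Icc 0 T)) (hc : ContinuousOn c (Icc 0 T))
    (hc' : ContinuousOn c' (Icc 0 T)) (hF : IntegrableOn F (Icc 0 T))
    (hF' : IntegrableOn F' (Icc 0 T)) (hcF : ∀ t ∈ Icc 0 T, c t = ∫ s in 0..t, F s)
    (hcF' : ∀ t ∈ Icc 0 T, c' t = ∫ s in 0..t, F' s)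
    (hlip : ∀ᵐ s ∂(volume.restrict (Icc 0 T)), ‖F' s - F s‖ ≤ Λ s * ‖c' s - c s‖) :
    EqOn c' c (Icc 0 T) := by
  have hu : ContinuousOn (fun s => ‖c' s - c s‖) (Icc 0 T) := (hc'.sub hc).norm
  intro t ht
  rw [← sub_eq_zero, ← norm_le_zero_iff]
  refine nonpos_of_le_integral_mul hΛ0 hΛ hu (fun t ht => ?_) t ht
  rw [hcF t ht, hcF' t ht]
  exact norm_integral_sub_integral_le ht hF hF' (hΛ.mul_continuousOn hu isCompact_Icc) hlip

noncomputable def picardMap (hT : 0 ≤ T) (G : ℝ → E → E)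
    (hG : ∀ c : C(Icc 0 T, E), IntegrableOn (fun s => G s (IccExtend hT c s)) (Icc 0 T))
    (c : C(Icc 0 T, E)) : C(Icc 0 T, E) :=
  ⟨fun t => ∫ s in 0..(t : ℝ), G s (IccExtend hT c s),
    ((hG c).continuousOn_primitive hT).domRestrict⟩

theorem IccExtend_picardMap (hT : 0 ≤ T) {G : ℝ → E → E}
    (hG : ∀ c : C(Icc 0 T, E), IntegrableOn (fun s => G s (IccExtend hT c s)) (Icc 0 T))
    (c : C(Icc 0 T, E)) {t : ℝ} (ht : t ∈ Icc 0 T) :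
    IccExtend hT (picardMap hT G hG c) t = ∫ s in 0..t, G s (IccExtend hT c s) :=
  IccExtend_of_mem hT _ ht

theorem dist_iterate_picardMap_le (hT : 0 ≤ T) {G : ℝ → E → E}
    (hG : ∀ c : C(Icc 0 T, E), IntegrableOn (fun s => G s (IccExtend hT c s)) (Icc 0 T))
    (hΛ0 : ∀ s, 0 ≤ Λ s) (hΛ : IntegrableOn Λ (Icc 0 T))
    (hlip : ∀ᵐ s ∂(volume.restrict (Icc 0 T)), ∀ u v, ‖G s u - G s v‖ ≤ Λ s * ‖u - v‖)
    (n : ℕ) (c d : C(Icc 0 T, E)) :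
    dist ((picardMap hT G hG)^[n] c) ((picardMap hT G hG)^[n] d)
      ≤ (∫ s in 0..T, Λ s) ^ n / n ! * dist c d := by
  set P := picardMap hT G hG
  have hlam0T : 0 ≤ ∫ s in 0..T, Λ s := intervalIntegral.integral_nonneg hT fun s _ => hΛ0 s
  have hext : ∀ c : C(Icc 0 T, E), Continuous (IccExtend hT c) :=
    fun c => continuous_IccExtend_iff.2 c.continuous
  have hpointwise := le_mul_primitive_pow_div_factorial (M := dist c d)
    (u := fun n t => ‖IccExtend hT (P^[n] c) t - IccExtend hT (P^[n] d) t‖) hΛ0 hΛ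
    (fun n => ((hext _).sub (hext _)).norm.continuousOn) ?_ ?_ n
  · refine (ContinuousMap.dist_le (by positivity)).2 fun t => ?_
    have hlam : 0 ≤ ∫ s in 0..t, Λ s :=
      intervalIntegral.integral_nonneg t.2.1 fun s _ => hΛ0 s
    have hlamT : ∫ s in 0..t, Λ s ≤ ∫ s in 0..T, Λ s :=
      intervalIntegral.integral_mono_interval le_rfl t.2.1 t.2.2
        (Eventually.of_forall hΛ0) (hΛ.intervalIntegrable_of_mem_Icc_s11 ⟨le_rfl, hT⟩ ⟨hT, le_rfl⟩)
    calc dist (P^[n] c t) (P^[n] d t)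
        = ‖IccExtend hT (P^[n] c) t - IccExtend hT (P^[n] d) t‖ := by simp [dist_eq_norm]
      _ ≤ dist c d * (∫ s in 0..t, Λ s) ^ n / n ! := hpointwise t t.2
      _ ≤ (∫ s in 0..T, Λ s) ^ n / n ! * dist c d := by
        rw [mul_comm, mul_div_right_comm]
        gcongr
  · intro t ht
    simpa [IccExtend_of_mem hT _ ht, dist_eq_norm] using
      ContinuousMap.dist_apply_le_dist (f := c) (g := d) ⟨t, ht⟩
  · intro n t ht
    simp only [Function.iterate_succ_apply']
    rw [IccExtend_picardMap hT hG _ ht, IccExtend_picardMap hT hG _ ht]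
    exact norm_integral_sub_integral_le ht (hG _) (hG _)
      (hΛ.mul_continuousOn ((hext _).sub (hext _)).norm.continuousOn isCompact_Icc)
      (by filter_upwards [hlip] with s hs using hs _ _)

theorem exists_continuous_eq_integral [CompleteSpace E] (hT : 0 ≤ T) {G : ℝ → E → E}
    (hG : ∀ c : ℝ → E, Continuous c → IntegrableOn (fun s => G s (c s)) (Icc 0 T))
    (hΛ0 : ∀ s, 0 ≤ Λ s) (hΛ : IntegrableOn Λ (Icc 0 T))
    (hlip : ∀ᵐ s ∂(volume.restrict (Icc 0 T)), ∀ u v, ‖G s u - G s v‖ ≤ Λ s * ‖u - v‖) :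
    ∃ c : ℝ → E, Continuous c ∧ ∀ t ∈ Icc 0 T, c t = ∫ s in 0..t, G s (c s) := by
  have hG' : ∀ c : C(Icc 0 T, E), IntegrableOn (fun s => G s (IccExtend hT c s)) (Icc 0 T) :=
    fun c => hG _ (continuous_IccExtend_iff.2 c.continuous)
  have hlam : 0 ≤ ∫ s in 0..T, Λ s := intervalIntegral.integral_nonneg hT fun s _ => hΛ0 s
  obtain ⟨n, hn⟩ := ((FloorSemiring.tendsto_pow_div_factorial_atTop
    (∫ s in 0..T, Λ s)).eventually (gt_mem_nhds one_pos)).exists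
  have hcontr : ContractingWith (Real.toNNReal ((∫ s in 0..T, Λ s) ^ n / n !))
      (picardMap hT G hG')^[n] := by
    refine ⟨by simpa using hn, LipschitzWith.of_dist_le_mul fun c d => ?_⟩
    rw [Real.coe_toNNReal _ (by positivity)]
    exact dist_iterate_picardMap_le hT hG' hΛ0 hΛ hlip n c d
  have hz := hcontr.isFixedPt_fixedPoint_iterate
  refine ⟨IccExtend hT hcontr.fixedPoint, continuous_IccExtend_iff.2 (ContinuousMap.continuous _),
    fun t ht => ?_⟩
  rw [← IccExtend_picardMap hT hG' _ ht, hz.eq]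

end IntegralEquation

theorem le_of_eq_integral_of_eq_zero_of_lt {T r : ℝ} {u f : ℝ → ℝ} (hr : 0 ≤ r)
    (hu : ContinuousOn u (Icc 0 T)) (hf : IntegrableOn f (Icc 0 T))
    (huf : ∀ t ∈ Icc 0 T, u t = ∫ s in 0..t, f s) (hf0 : ∀ s ∈ Icc 0 T, r < u s → f s = 0) :
    ∀ t ∈ Icc 0 T, u t ≤ r := by
  intro t ht
  have h0 : (0 : ℝ) ∈ Icc 0 T := ⟨le_rfl, ht.1.trans ht.2⟩
  set S := Icc 0 t ∩ u ⁻¹' Iic r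
  have hS : IsClosed S :=
    (hu.mono (Icc_subset_Icc le_rfl ht.2)).preimage_isClosed_of_isClosed isClosed_Icc isClosed_Iic
  have h0S : (0 : ℝ) ∈ S := ⟨left_mem_Icc.2 ht.1, by simp [huf 0 h0, hr]⟩
  have hbdd : BddAbove S := bddAbove_Icc.mono inter_subset_left
  -- past the last time `τ ≤ t` at which `u ≤ r`, the integrand vanishes
  set τ := sSup S
  have hτ : τ ∈ S := hS.csSup_mem ⟨0, h0S⟩ hbdd
  have hτI : τ ∈ Icc 0 T := ⟨hτ.1.1, hτ.1.2.trans ht.2⟩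
  have hzero : ∫ s in τ..t, f s = 0 := by
    rw [intervalIntegral.integral_of_le hτ.1.2]
    refine setIntegral_eq_zero_of_forall_eq_zero fun s hs => ?_
    refine hf0 s ⟨hτ.1.1.trans hs.1.le, hs.2.trans ht.2⟩ (lt_of_not_ge fun hsr => ?_)
    exact (le_csSup hbdd ⟨⟨hτ.1.1.trans hs.1.le, hs.2⟩, hsr⟩).not_gt hs.1
  calc u t = u τ + ∫ s in τ..t, f s := by
        rw [huf t ht, huf τ hτI, intervalIntegral.integral_add_adjacent_intervals
          (hf.intervalIntegrable_of_mem_Icc_s11 h0 hτI) (hf.intervalIntegrable_of_mem_Icc_s11 hτI ht)]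
    _ ≤ r := by rw [hzero, add_zero]; exact hτ.2

section Clamp

variable {K : Type*} [TopologicalSpace K] {r u : C(K, ℝ)}

def clamp (r u : C(K, ℝ)) : C(K, ℝ) :=
  u ⊓ r ⊔ 0

@[simp]
theorem clamp_apply (r u : C(K, ℝ)) (x : K) : clamp r u x = max (min (u x) (r x)) 0 :=
  rfl

theorem clamp_nonneg (r u : C(K, ℝ)) (x : K) : 0 ≤ clamp r u x :=
  le_max_right _ _

theorem clamp_le {x : K} (hr : 0 ≤ r x) (u : C(K, ℝ)) : clamp r u x ≤ r x :=
  max_le (min_le_right _ _) hr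

theorem clamp_of_le {x : K} (hr : 0 ≤ r x) (hu : r x ≤ u x) : clamp r u x = r x := by
  simp [min_eq_right hu, hr]

theorem clamp_eq_self (hu : ∀ x, 0 ≤ u x ∧ u x ≤ r x) : clamp r u = u := by
  ext x
  simp [min_eq_left (hu x).2, (hu x).1]

theorem norm_clamp_le [CompactSpace K] (hr : ∀ x, 0 ≤ r x) (u : C(K, ℝ)) :
    ‖clamp r u‖ ≤ ‖r‖ :=
  (ContinuousMap.norm_le _ (norm_nonneg r)).2 fun x => by
    rw [Real.norm_of_nonneg (clamp_nonneg r u x)]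
    exact (clamp_le (hr x) u).trans ((le_abs_self _).trans (r.norm_coe_le_norm x))

theorem lipschitzWith_clamp [CompactSpace K] (r : C(K, ℝ)) : LipschitzWith 1 (clamp r) :=
  LipschitzWith.of_dist_le_mul fun u v => by
    rw [NNReal.coe_one, one_mul, ContinuousMap.dist_le dist_nonneg]
    intro x
    calc dist (clamp r u x) (clamp r v x) ≤ |min (u x) (r x) - min (v x) (r x)| :=
          abs_max_sub_max_le_abs _ _ _
      _ ≤ max |u x - v x| |r x - r x| := abs_min_sub_min_le_max _ _ _ _
      _ = dist (u x) (v x) := by simp [Real.dist_eq]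
      _ ≤ dist u v := ContinuousMap.dist_apply_le_dist x

end Clamp

section CellRate

variable {K : Type*} [TopologicalSpace K] {N : ℕ} (h : C((Fin N → ℝ) × ℝ × ℝ, ℝ))
  (κ : C(K, ℝ))

/-- The rate of the cell ODE, with `h` standing for `H` and `κ` for `1/(1 − ρ)`. -/
def cellRate (v : Fin N → C(K, ℝ)) (y u : C(K, ℝ)) : C(K, ℝ) :=
  ⟨fun x => h (fun j => v j x, y x, u x) * (1 - u x * κ x), by fun_prop⟩

@[simp]
theorem cellRate_apply (v : Fin N → C(K, ℝ)) (y u : C(K, ℝ)) (x : K) :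
    cellRate h κ v y u x = h (fun j => v j x, y x, u x) * (1 - u x * κ x) :=
  rfl

theorem continuous_cellRate [CompactSpace K] :
    Continuous fun z : (Fin N → C(K, ℝ)) × C(K, ℝ) × C(K, ℝ) =>
      cellRate h κ z.1 z.2.1 z.2.2 := by
  refine ContinuousMap.continuous_of_continuous_uncurry _ ?_
  simp only [Function.uncurry_def, cellRate, ContinuousMap.coe_mk]
  fun_prop

variable [CompactSpace K] {h κ} {v : Fin N → C(K, ℝ)} {y u w : C(K, ℝ)} {m ℓ : ℝ}

theorem abs_one_sub_mul_le (u κ : C(K, ℝ)) (x : K) : |1 - u x * κ x| ≤ 1 + ‖u‖ * ‖κ‖ := by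
  calc |1 - u x * κ x| ≤ |1| + |u x| * |κ x| := by rw [← abs_mul]; exact abs_sub _ _
    _ ≤ 1 + ‖u‖ * ‖κ‖ := by
      rw [abs_one]
      gcongr
      exacts [u.norm_coe_le_norm x, κ.norm_coe_le_norm x]

theorem norm_cellRate_le (hm0 : 0 ≤ m) (hm : ∀ x, |h (fun j => v j x, y x, u x)| ≤ m) :
    ‖cellRate h κ v y u‖ ≤ m * (1 + ‖u‖ * ‖κ‖) :=
  (ContinuousMap.norm_le _ (by positivity)).2 fun x => by
    rw [cellRate_apply, Real.norm_eq_abs, abs_mul]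
    exact mul_le_mul (hm x) (abs_one_sub_mul_le u κ x) (abs_nonneg _) hm0

theorem norm_cellRate_sub_le (hm0 : 0 ≤ m) (hℓ0 : 0 ≤ ℓ)
    (hm : ∀ x, |h (fun j => v j x, y x, w x)| ≤ m)
    (hℓ : ∀ x, |h (fun j => v j x, y x, u x) - h (fun j => v j x, y x, w x)| ≤ ℓ * ‖u - w‖) :
    ‖cellRate h κ v y u - cellRate h κ v y w‖ ≤ (ℓ * (1 + ‖u‖ * ‖κ‖) + m * ‖κ‖) * ‖u - w‖ :=
  (ContinuousMap.norm_le _ (by positivity)).2 fun x => by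
    set A := h (fun j => v j x, y x, u x)
    set A' := h (fun j => v j x, y x, w x)
    have hsplit : A * (1 - u x * κ x) - A' * (1 - w x * κ x)
        = (A - A') * (1 - u x * κ x) + A' * ((w - u) x * κ x) := by simp; ring
    have hwu : |(w - u) x| ≤ ‖u - w‖ := by
      rw [← norm_neg (u - w), neg_sub]; exact (w - u).norm_coe_le_norm x
    rw [ContinuousMap.sub_apply, cellRate_apply, cellRate_apply, Real.norm_eq_abs, hsplit]
    calc _ ≤ |A - A'| * |1 - u x * κ x| + |A'| * (|(w - u) x| * |κ x|) := by
          rw [← abs_mul, ← abs_mul, ← abs_mul]; exact abs_add_le _ _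
      _ ≤ ℓ * ‖u - w‖ * (1 + ‖u‖ * ‖κ‖) + m * (‖u - w‖ * ‖κ‖) := by
          gcongr
          exacts [hℓ x, abs_one_sub_mul_le u κ x, hm x, κ.norm_coe_le_norm x]
      _ = _ := by ring

theorem norm_cellRate_clamp_le {r : C(K, ℝ)} (hr : ∀ x, 0 ≤ r x)
    (hm : ∀ u ∈ Metric.closedBall (0 : C(K, ℝ)) ‖r‖, ∀ x, |h (fun j => v j x, y x, u x)| ≤ m)
    (u : C(K, ℝ)) : ‖cellRate h κ v y (clamp r u)‖ ≤ |m| * (1 + ‖r‖ * ‖κ‖) := by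
  have hu := norm_clamp_le hr u
  refine (norm_cellRate_le (abs_nonneg m)
    fun x => (hm _ (mem_closedBall_zero_iff.2 hu) x).trans (le_abs_self m)).trans ?_
  gcongr

theorem norm_cellRate_clamp_sub_le {r : C(K, ℝ)} (hr : ∀ x, 0 ≤ r x)
    (hm : ∀ u ∈ Metric.closedBall (0 : C(K, ℝ)) ‖r‖, ∀ x, |h (fun j => v j x, y x, u x)| ≤ m)
    (hℓ : ∀ u ∈ Metric.closedBall (0 : C(K, ℝ)) ‖r‖, ∀ w ∈ Metric.closedBall (0 : C(K, ℝ)) ‖r‖,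
      ∀ x, |h (fun j => v j x, y x, u x) - h (fun j => v j x, y x, w x)| ≤ ℓ * ‖u - w‖)
    (u w : C(K, ℝ)) :
    ‖cellRate h κ v y (clamp r u) - cellRate h κ v y (clamp r w)‖
      ≤ (|ℓ| * (1 + ‖r‖ * ‖κ‖) + |m| * ‖κ‖) * ‖u - w‖ := by
  have hball : ∀ u, clamp r u ∈ Metric.closedBall 0 ‖r‖ :=
    fun u => mem_closedBall_zero_iff.2 (norm_clamp_le hr u)
  refine (norm_cellRate_sub_le (abs_nonneg m) (abs_nonneg ℓ)
    (fun x => (hm _ (hball w) x).trans (le_abs_self m))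
    (fun x => (hℓ _ (hball u) _ (hball w) x).trans (by gcongr; exact le_abs_self ℓ))).trans ?_
  gcongr
  · exact norm_clamp_le hr u
  · simpa using (lipschitzWith_clamp r).norm_sub_le u w

end CellRate

section CellODE

variable {K : Type*} [TopologicalSpace K] [CompactSpace K] {N : ℕ} {T : ℝ}
  {a : ℝ → Fin N → C(K, ℝ)} {b : ℝ → C(K, ℝ)}

theorem clamped_solution_mem_band {h : C((Fin N → ℝ) × ℝ × ℝ, ℝ)} {r κ : C(K, ℝ)}
    {c : ℝ → C(K, ℝ)}
    (hr : ∀ x, 0 < r x) (hrκ : ∀ x, r x * κ x = 1)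
    (hpos : ∀ᵐ s ∂(volume.restrict (Icc 0 T)), ∀ x z, 0 ≤ z →
      0 ≤ h (fun j => a s j x, b s x, z))
    (hc : ContinuousOn c (Icc 0 T))
    (hF : IntegrableOn (fun s => cellRate h κ (a s) (b s) (clamp r (c s))) (Icc 0 T))
    (hcF : ∀ t ∈ Icc 0 T, c t = ∫ s in 0..t, cellRate h κ (a s) (b s) (clamp r (c s))) :
    ∀ t ∈ Icc 0 T, ∀ x, 0 ≤ c t x ∧ c t x ≤ r x := by
  intro t ht x
  have h0 : (0 : ℝ) ∈ Icc 0 T := ⟨le_rfl, ht.1.trans ht.2⟩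
  set f : ℝ → ℝ := fun s => cellRate h κ (a s) (b s) (clamp r (c s)) x
  have hf : Integrable f (volume.restrict (Icc 0 T)) :=
    (ContinuousMap.evalCLM ℝ x).integrable_comp hF
  have hcf : ∀ t ∈ Icc 0 T, c t x = ∫ s in 0..t, f s := fun t ht => by
    rw [hcF t ht]
    exact ((ContinuousMap.evalCLM ℝ x).intervalIntegral_comp_comm
      (hF.intervalIntegrable_of_mem_Icc_s11 h0 ht)).symm
  have hf0 : ∀ᵐ s ∂(volume.restrict (Icc 0 T)), 0 ≤ f s := by
    filter_upwards [hpos] with s hs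
    have hκ : 0 < κ x := pos_of_mul_pos_right (by rw [hrκ x]; exact one_pos) (hr x).le
    have : clamp r (c s) x * κ x ≤ 1 := by
      rw [← hrκ x]; exact mul_le_mul_of_nonneg_right (clamp_le (hr x).le _) hκ.le
    exact mul_nonneg (hs x _ (clamp_nonneg _ _ x)) (sub_nonneg.2 this)
  refine ⟨?_, le_of_eq_integral_of_eq_zero_of_lt (hr x).le
    ((continuous_eval_const x).comp_continuousOn hc) hf hcf
    (fun s _ (hs : r x < c s x) => ?_) t ht⟩
  · rw [hcf t ht]
    exact intervalIntegral.integral_nonneg_of_ae_restrict ht.1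
      (ae_restrict_of_ae_restrict_of_subset (Icc_subset_Icc le_rfl ht.2) hf0)
  · simp only [f, cellRate_apply, clamp_of_le (hr x).le hs.le, hrκ x, sub_self, mul_zero]

def CellRateBounds (T : ℝ) (a : ℝ → Fin N → C(K, ℝ))
    (b : ℝ → C(K, ℝ)) (H : (Fin N → ℝ) → ℝ → ℝ → ℝ) (p : ℝ≥0∞) : Prop :=
  ∀ B : Set C(K, ℝ), Bornology.IsBounded B →
    ∃ m L : ℝ → ℝ, MemLp m p (volume.restrict (Icc 0 T)) ∧
      IntegrableOn L (Icc 0 T) ∧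
      (∀ᵐ t ∂(volume.restrict (Icc (0:ℝ) T)), ∀ c' ∈ B, ∀ x : K,
        |H (fun j => a t j x) (b t x) (c' x)| ≤ m t) ∧
      (∀ᵐ t ∂(volume.restrict (Icc (0:ℝ) T)), ∀ c' ∈ B, ∀ c'' ∈ B, ∀ x : K,
        |H (fun j => a t j x) (b t x) (c' x) - H (fun j => a t j x) (b t x) (c'' x)|
          ≤ L t * ‖c' - c''‖)

end CellODE

section CellSol

variable {K : Type*} [MetricSpace K] [CompactSpace K] {N : ℕ} {T : ℝ} {ρ : C(K, ℝ)}
  {a : ℝ → Fin N → C(K, ℝ)} {b : ℝ → C(K, ℝ)} {H : (Fin N → ℝ) → ℝ → ℝ → ℝ} {p : ℝ≥0∞}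

theorem IsCellSol.eqOn {c c' : ℝ → C(K, ℝ)} (hρ : ∀ x, ρ x < 1)
    (hH : Continuous fun q : (Fin N → ℝ) × ℝ × ℝ => H q.1 q.2.1 q.2.2) (hp : 1 ≤ p)
    (hbound : CellRateBounds T a b H p) (hc : IsCellSol T ρ a b H p c)
    (hc' : IsCellSol T ρ a b H p c') : EqOn c' c (Icc 0 T) := by
  obtain ⟨hcc, F, hF, hFp, hcF⟩ := hc
  obtain ⟨hcc', F', hF', hFp', hcF'⟩ := hc'
  let κ : C(K, ℝ) :=
    ⟨fun x => (1 - ρ x)⁻¹,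
      (continuous_const.sub ρ.continuous).inv₀ fun x => (sub_pos.2 (hρ x)).ne'⟩
  have hrate : ∀ {c F : ℝ → C(K, ℝ)},
      (∀ t ∈ Icc (0:ℝ) T, ∀ x,
        F t x = H (fun j => a t j x) (b t x) (c t x) * (1 - c t x / (1 - ρ x))) →
      ∀ t ∈ Icc 0 T, F t = cellRate ⟨_, hH⟩ κ (a t) (b t) (c t) := fun hF t ht => by
    ext x
    simp [hF t ht x, κ, div_eq_mul_inv]
  obtain ⟨R, hR0, hR⟩ := ((isCompact_Icc.image_of_continuousOn hcc).union
    (isCompact_Icc.image_of_continuousOn hcc')).isBounded.subset_closedBall_lt 0 0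
  obtain ⟨m, L, hm, hL, hmB, hLB⟩ := hbound _ (Metric.isBounded_closedBall (x := 0) (r := R))
  refine eqOn_of_norm_integrand_sub_le (Λ := fun s => |L s| * (1 + R * ‖κ‖) + |m s| * ‖κ‖)
    (fun s => by positivity) ((hL.abs.mul_const _).add ((hm.integrable hp).abs.mul_const _))
    hcc hcc' (hFp.integrable hp) (hFp'.integrable hp) hcF hcF' ?_
  filter_upwards [ae_restrict_mem measurableSet_Icc, hmB, hLB] with s hs hms hLs
  have hcs : c s ∈ Metric.closedBall 0 R := hR (Or.inl ⟨s, hs, rfl⟩)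
  have hcs' : c' s ∈ Metric.closedBall 0 R := hR (Or.inr ⟨s, hs, rfl⟩)
  rw [hrate hF s hs, hrate hF' s hs]
  refine (norm_cellRate_sub_le (abs_nonneg (m s)) (abs_nonneg (L s))
    (fun x => (hms _ hcs x).trans (le_abs_self _))
    (fun x => (hLs _ hcs' _ hcs x).trans (by gcongr; exact le_abs_self _))).trans ?_
  gcongr
  exact mem_closedBall_zero_iff.1 hcs'

theorem exists_isCellSol_mem_band (hT : 0 ≤ T) (hρ : ∀ x, ρ x < 1)
    (ha : AEStronglyMeasurable a (volume.restrict (Icc 0 T)))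
    (ha0 : ∀ᵐ t ∂(volume.restrict (Icc (0:ℝ) T)), ∀ (j : Fin N) (x : K), 0 ≤ a t j x)
    (hb : ContinuousOn b (Icc 0 T)) (hb0 : ∀ t ∈ Icc (0:ℝ) T, ∀ x : K, 0 ≤ b t x)
    (hH : Continuous fun q : (Fin N → ℝ) × ℝ × ℝ => H q.1 q.2.1 q.2.2)
    (hHpos : ∀ (v : Fin N → ℝ) (y z : ℝ), (∀ j, 0 ≤ v j) → 0 ≤ y → 0 ≤ z → 0 ≤ H v y z)
    (hp : 1 ≤ p) (hbound : CellRateBounds T a b H p) :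
    ∃ c : ℝ → C(K, ℝ), IsCellSol T ρ a b H p c ∧
      ∀ t ∈ Icc (0:ℝ) T, ∀ x : K, 0 ≤ c t x ∧ c t x ≤ 1 - ρ x := by
  set r : C(K, ℝ) := 1 - ρ
  have hr : ∀ x, 0 < r x := fun x => sub_pos.2 (hρ x)
  let κ : C(K, ℝ) := ⟨fun x => (r x)⁻¹, r.continuous.inv₀ fun x => (hr x).ne'⟩
  let G : ℝ → C(K, ℝ) → C(K, ℝ) := fun s u => cellRate ⟨_, hH⟩ κ (a s) (b s) (clamp r u)
  obtain ⟨m, L, hm, hL, hmB, hLB⟩ := hbound _ (Metric.isBounded_closedBall (x := 0) (r := ‖r‖))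
  have hG : ∀ c, Continuous c → MemLp (fun s => G s (c s)) p (volume.restrict (Icc 0 T)) :=
    fun c hc => hm.of_le_mul (c := 1 + ‖r‖ * ‖κ‖)
      ((continuous_cellRate _ κ).comp_aestronglyMeasurable
        (ha.prodMk ((hb.aestronglyMeasurable measurableSet_Icc).prodMk
          ((lipschitzWith_clamp r).continuous.comp hc).aestronglyMeasurable)))
      (by
        filter_upwards [hmB] with s hs
        rw [Real.norm_eq_abs, mul_comm]
        exact norm_cellRate_clamp_le (fun x => (hr x).le) hs (c s))
  obtain ⟨c, hc, hcG⟩ := exists_continuous_eq_integral hT (fun c hc => (hG c hc).integrable hp)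
    (Λ := fun s => |L s| * (1 + ‖r‖ * ‖κ‖) + |m s| * ‖κ‖) (fun s => by positivity)
    ((hL.abs.mul_const _).add ((hm.integrable hp).abs.mul_const _))
    (by
      filter_upwards [hmB, hLB] with s hms hLs
      exact norm_cellRate_clamp_sub_le (fun x => (hr x).le) hms hLs)
  have hpos : ∀ᵐ s ∂(volume.restrict (Icc 0 T)), ∀ x z, 0 ≤ z →
      0 ≤ (⟨_, hH⟩ : C((Fin N → ℝ) × ℝ × ℝ, ℝ)) (fun j => a s j x, b s x, z) := by
    filter_upwards [ha0, ae_restrict_mem measurableSet_Icc] with s has hs x z hz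
    exact hHpos _ _ _ (fun j => has j x) (hb0 s hs x) hz
  have hband := clamped_solution_mem_band hr (fun x => mul_inv_cancel₀ (hr x).ne') hpos
    hc.continuousOn ((hG c hc).integrable hp) hcG
  refine ⟨c, ⟨hc.continuousOn, fun s => G s (c s), fun t ht x => ?_, hG c hc, hcG⟩, hband⟩
  simp [G, clamp_eq_self (hband t ht), κ, r, div_eq_mul_inv]

end CellSol

theorem cell_ode_solvability_general
    {K : Type*} [MetricSpace K] [CompactSpace K]
    {T : ℝ} (hT : 0 < T) {N : ℕ}
    (ρ : C(K, ℝ)) {cP CP : ℝ} (hCP : CP < 1)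
    (hρ : ∀ x : K, ρ x ∈ Icc cP CP)
    (a : ℝ → Fin N → C(K, ℝ))
    (ha : AEStronglyMeasurable a (volume.restrict (Icc 0 T)))
    (ha0 : ∀ᵐ t ∂(volume.restrict (Icc (0:ℝ) T)), ∀ (j : Fin N) (x : K), 0 ≤ a t j x)
    (b : ℝ → C(K, ℝ)) (hb : ContinuousOn b (Icc 0 T))
    (hb01 : ∀ t ∈ Icc (0:ℝ) T, ∀ x : K, b t x ∈ Icc (0:ℝ) 1)
    (H : (Fin N → ℝ) → ℝ → ℝ → ℝ)
    (hH : LocallyLipschitz (fun q : (Fin N → ℝ) × ℝ × ℝ => H q.1 q.2.1 q.2.2))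
    (hHpos : ∀ (v : Fin N → ℝ) (y z : ℝ),
      (∀ j, 0 ≤ v j) → 0 ≤ y → 0 ≤ z → 0 ≤ H v y z)
    (p : ℝ≥0∞) (hp : 1 ≤ p)
    (hbound : ∀ B : Set C(K, ℝ), Bornology.IsBounded B →
      ∃ m L : ℝ → ℝ, MemLp m p (volume.restrict (Icc 0 T)) ∧
        IntegrableOn L (Icc 0 T) ∧
        (∀ᵐ t ∂(volume.restrict (Icc (0:ℝ) T)), ∀ c' ∈ B, ∀ x : K,
          |H (fun j => a t j x) (b t x) (c' x)| ≤ m t) ∧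
        (∀ᵐ t ∂(volume.restrict (Icc (0:ℝ) T)), ∀ c' ∈ B, ∀ c'' ∈ B, ∀ x : K,
          |H (fun j => a t j x) (b t x) (c' x) - H (fun j => a t j x) (b t x) (c'' x)|
            ≤ L t * ‖c' - c''‖)) :
    ∃ c : ℝ → C(K, ℝ),
      IsCellSol T ρ a b H p c ∧
      (∀ c' : ℝ → C(K, ℝ), IsCellSol T ρ a b H p c' → ∀ t ∈ Icc (0:ℝ) T, c' t = c t) ∧
      ∀ t ∈ Icc (0:ℝ) T, ∀ x : K, 0 ≤ c t x ∧ c t x ≤ 1 - ρ x := by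
  have hρ1 : ∀ x, ρ x < 1 := fun x => (hρ x).2.trans_lt hCP
  obtain ⟨c, hc, hband⟩ := exists_isCellSol_mem_band hT.le hρ1 ha ha0 hb
    (fun t ht x => (hb01 t ht x).1) hH.continuous hHpos hp hbound
  exact ⟨c, hc, fun c' hc' t ht => hc.eqOn hρ1 hH.continuous hp hbound hc' ht, hband⟩

/-- Solvability of the cell ODE (Lemma B.6 of the paper): under the stated positivity,
local Lipschitz and integrability assumptions on `H`, there is a unique continuous
solution `c : I → C(K,ℝ)` of `d_t c = H(a, b, c)(1 − c/(1 − ρ))` with `c(0) = 0`,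
whose integrand lies in `L^p(I, C(K,ℝ))`, and it satisfies
`0 ≤ c(t)(x) ≤ 1 − ρ(x)` for all `t ∈ I`, `x ∈ K`. -/
theorem cell_ode_solvability
    {K : Type*} [MetricSpace K] [CompactSpace K]
    {T : ℝ} (hT : 0 < T) {N : ℕ} (hN : 1 ≤ N)
    (ρ : C(K, ℝ)) {cP CP : ℝ} (hcP : 0 < cP) (hcPCP : cP < CP) (hCP : CP < 1)
    (hρ : ∀ x : K, ρ x ∈ Icc cP CP)
    (a : ℝ → Fin N → C(K, ℝ))
    (ha : AEStronglyMeasurable a (volume.restrict (Icc 0 T)))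
    (ha0 : ∀ᵐ t ∂(volume.restrict (Icc (0:ℝ) T)), ∀ (j : Fin N) (x : K), 0 ≤ a t j x)
    (b : ℝ → C(K, ℝ)) (hb : ContinuousOn b (Icc 0 T))
    (hb01 : ∀ t ∈ Icc (0:ℝ) T, ∀ x : K, b t x ∈ Icc (0:ℝ) 1)
    (H : (Fin N → ℝ) → ℝ → ℝ → ℝ)
    (hH : LocallyLipschitz (fun q : (Fin N → ℝ) × ℝ × ℝ => H q.1 q.2.1 q.2.2))
    (hHpos : ∀ (v : Fin N → ℝ) (y z : ℝ),
      (∀ j, 0 ≤ v j) → 0 ≤ y → 0 ≤ z → 0 ≤ H v y z)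
    (p : ℝ≥0∞) (hp : 1 ≤ p)
    (hbound : ∀ B : Set C(K, ℝ), Bornology.IsBounded B →
      ∃ m L : ℝ → ℝ, MemLp m p (volume.restrict (Icc 0 T)) ∧
        IntegrableOn L (Icc 0 T) ∧
        (∀ᵐ t ∂(volume.restrict (Icc (0:ℝ) T)), ∀ c' ∈ B, ∀ x : K,
          |H (fun j => a t j x) (b t x) (c' x)| ≤ m t) ∧
        (∀ᵐ t ∂(volume.restrict (Icc (0:ℝ) T)), ∀ c' ∈ B, ∀ c'' ∈ B, ∀ x : K,
          |H (fun j => a t j x) (b t x) (c' x) - H (fun j => a t j x) (b t x) (c'' x)|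
            ≤ L t * ‖c' - c''‖)) :
    ∃ c : ℝ → C(K, ℝ),
      IsCellSol T ρ a b H p c ∧
      (∀ c' : ℝ → C(K, ℝ), IsCellSol T ρ a b H p c' → ∀ t ∈ Icc (0:ℝ) T, c' t = c t) ∧
      ∀ t ∈ Icc (0:ℝ) T, ∀ x : K, 0 ≤ c t x ∧ c t x ≤ 1 - ρ x :=
  cell_ode_solvability_general hT ρ hCP hρ a ha ha0 b hb hb01 H hH hHpos p hp hbound
end
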